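/- Let n > 2 be an odd natural number, ξ = exp(2πi/n), 0 < m < n, s = n − m, and ι(c) = (n−c) mod n. Let l_0, …, l_{m−1} be integers pairwise distinct modulo n and j_0, …, j_{s−1} integers pairwise distinct modulo n. Let S_t be the n×n matrix over ℂ[t] whose rows are: for 0 ≤ a ≤ m−1, (S_t)_{a,c} = ξ^{c·l_a} t^c, and for 0 ≤ b ≤ s−1, (S_t)_{m+b,c} = ξ^{c·j_b} t^{ι(c)}, where 0 ≤ c ≤ n−1. For a subset p ⊆ {0,…,n−1} with |p| = m, let D(p) = det(S_t(rows {0,…,m−1}, columns p)) · det(S_t(rows {m,…,n−1}, columns {0,…,n−1}∖p)), where the submatrices keep the induced orderings of rows and columns. Set C = (∏_{a=0}^{s−1} ξ^{m·j_a}) · (∏_{0 ≤ k < ℓ ≤ s−1} (ξ^{j_ℓ} − ξ^{j_k})) · (∏_{0 ≤ k < j ≤ m−1} (ξ^{l_j} − ξ^{l_k})) and κ(n,m) = m(m−1)/2 + (n−m)(n−m+1)/2. Then D(p) = C·t^{κ(n,m)} if and only if p = {0,1,…,m−1}. -/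

import Mathlib

open Polynomial

/-- `ξ = exp(2πi/n)`, a primitive `n`-th root of unity. -/
noncomputable def xi (n : ℕ) : ℂ := Complex.exp (2 * Real.pi * Complex.I / n)

/-!
Every entry of `S` is a scalar times a power of `X` whose exponent depends only on the column, so
each minor equals `C (scalar minor) * X ^ (sum of its column exponents)`. As `ξ` is a primitive
`n`-th root of unity, the `ξ ^ l a` and the `ξ ^ j b` are distinct and the Vandermonde products
in `C` do not vanish; the identity therefore holds iff the exponents agree and the scalars agree.
With `T = ∑_{c ∈ p} c`, and `(n - 0) % n = 0` the only exponent of the second block that is not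
`n - c`, the exponents agree iff `2T = m(m-1) + [0 ∉ p] n`. Parity excludes `0 ∉ p` since `n` is
odd, and `m(m-1)/2` is the least sum of `m` distinct naturals, attained only by `{0, …, m-1}`.
For that `p` both scalar minors are Vandermonde determinants, the second after pulling `ξ ^ (m j_b)`
out of its rows, and their product is `C`.
-/

open Finset Matrix

theorem Matrix.det_of_C_mul_X_pow {R ι : Type*} [CommRing R] [Fintype ι] [DecidableEq ι]
    (A : Matrix ι ι R) (e : ι → ℕ) :
    (of fun i c => C (A i c) * X ^ e c).det = C A.det * X ^ ∑ c, e c := by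
  have h := det_mul_row (fun c => (X : R[X]) ^ e c) (A.map C)
  rw [prod_pow_eq_pow_sum, ← RingHom.mapMatrix_apply, ← RingHom.map_det, mul_comm] at h
  simpa only [RingHom.mapMatrix_apply, map_apply, mul_comm (X ^ _)] using h

theorem Matrix.det_submatrix_eq_C_mul_X_pow {R ι κ : Type*} [CommRing R] {k : ℕ}
    (S : Matrix ι κ R[X]) (r : Fin k → ι) (f : Fin k → κ) (A : Fin k → κ → R) (e : κ → ℕ)
    (hS : ∀ i c, S (r i) c = C (A i c) * X ^ e c) :
    (S.submatrix r f).det = C (of fun i i' => A i (f i')).det * X ^ ∑ i, e (f i) := by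
  rw [← det_of_C_mul_X_pow]
  congr 1
  ext i i'
  simp [hS]

theorem prod_filter_fst_lt_snd_sub_eq_det_vandermonde {R : Type*} [CommRing R] {k : ℕ}
    (v : Fin k → R) :
    ∏ q ∈ univ.filter (fun q : Fin k × Fin k => q.1 < q.2), (v q.2 - v q.1)
      = (vandermonde v).det := by
  rw [det_vandermonde, prod_filter, ← univ_product_univ, prod_product]
  refine prod_congr rfl fun i _ => ?_
  rw [← prod_filter]
  congr 1
  ext; simp

theorem det_of_zpow_eq_prod_mul_det_vandermonde {K : Type*} [Field K] {k : ℕ} {x : K}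
    (hx : x ≠ 0) (v : Fin k → ℤ) (d : ℕ) (g : Fin k → ℕ) (hg : ∀ i, g i = d + i) :
    (of fun a i => x ^ ((g i : ℤ) * v a)).det
      = (∏ a, x ^ ((d : ℤ) * v a)) * (vandermonde fun a => x ^ v a).det := by
  rw [← det_mul_column]
  congr 1
  ext a i
  rw [of_apply, of_apply, vandermonde_apply, hg, Nat.cast_add, add_mul, zpow_add₀ hx,
    ← zpow_natCast, ← _root_.zpow_mul, mul_comm (v a)]

theorem xi_isPrimitiveRoot {n : ℕ} (hn : n ≠ 0) : IsPrimitiveRoot (xi n) n := by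
  simpa [xi] using Complex.isPrimitiveRoot_exp n hn

theorem IsPrimitiveRoot.zpow_eq_zpow_iff_intCast_eq {K : Type*} [Field K] {ζ : K} {n : ℕ}
    (h : IsPrimitiveRoot ζ n) (hn : n ≠ 0) {a b : ℤ} : ζ ^ a = ζ ^ b ↔ (a : ZMod n) = b := by
  have hζ : ζ ≠ 0 := h.ne_zero hn
  rw [ZMod.intCast_eq_intCast_iff_dvd_sub, ← h.zpow_eq_one_iff_dvd, zpow_sub₀ hζ,
    div_eq_one_iff_eq (zpow_ne_zero _ hζ), eq_comm]

theorem det_vandermonde_xi_zpow_ne_zero {n k : ℕ} (hn : n ≠ 0) {v : Fin k → ℤ}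
    (hv : ∀ a b, a ≠ b → (v a : ZMod n) ≠ v b) : (vandermonde fun a => xi n ^ v a).det ≠ 0 :=
  det_vandermonde_ne_zero_iff.2 fun a b h => by_contra fun hab =>
    hv a b hab (((xi_isPrimitiveRoot hn).zpow_eq_zpow_iff_intCast_eq hn).1 h)

theorem Finset.sum_orderEmbOfFin {α β : Type*} [LinearOrder α] [AddCommMonoid β] {k : ℕ}
    (s : Finset α) (h : #s = k) (f : α → β) :
    ∑ i, f (s.orderEmbOfFin h i) = ∑ c ∈ s, f c := by
  conv_rhs => rw [← s.map_orderEmbOfFin_univ h, sum_map]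
  rfl

theorem Fin.val_le_of_strictMono {m n : ℕ} {f : Fin m → Fin n} (hf : StrictMono f) (i : Fin m) :
    (i : ℕ) ≤ f i := by
  simpa using card_le_card_of_injOn f (fun a ha => by simpa using hf (by simpa using ha))
    hf.injective.injOn (s := Iio i) (t := Iio (f i))

theorem orderEmbOfFin_filter_val_lt {n m : ℕ}
    (h : #(univ.filter fun c : Fin n => (c : ℕ) < m) = m) (i : Fin m) :
    ((univ.filter fun c : Fin n => (c : ℕ) < m).orderEmbOfFin h i : ℕ) = i := by
  have hmn : m ≤ n := by simpa [Fin.card_filter_val_lt] using h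
  rw [← orderEmbOfFin_unique h (f := Fin.castLE hmn) (by simp) (Fin.strictMono_castLE hmn)]
  rfl

theorem orderEmbOfFin_compl_filter_val_lt {n m : ℕ}
    (h : #(univ.filter fun c : Fin n => (c : ℕ) < m)ᶜ = n - m) (i : Fin (n - m)) :
    ((univ.filter fun c : Fin n => (c : ℕ) < m)ᶜ.orderEmbOfFin h i : ℕ) = m + i := by
  rw [← orderEmbOfFin_unique h (f := fun i => ⟨m + i, by omega⟩)
    (fun i => by simp only [mem_compl, mem_filter, mem_univ, true_and]; omega)
    (fun _ _ hab => Fin.mk_lt_mk.2 (Nat.add_lt_add_left hab m))]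

theorem sum_val_mul_two_eq_iff {n m : ℕ} {p : Finset (Fin n)} (hp : #p = m) :
    (∑ c ∈ p, (c : ℕ)) * 2 = m * (m - 1) ↔ p = univ.filter fun c : Fin n => (c : ℕ) < m := by
  have hgauss : (∑ i : Fin m, (i : ℕ)) * 2 = m * (m - 1) := by
    rw [Fin.sum_univ_eq_sum_range (fun i => i), sum_range_id_mul_two]
  have hle : ∀ i ∈ (univ : Finset (Fin m)), (i : ℕ) ≤ p.orderEmbOfFin hp i := fun i _ =>
    Fin.val_le_of_strictMono (p.orderEmbOfFin hp).strictMono i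
  rw [← hgauss, ← sum_orderEmbOfFin p hp, Nat.mul_right_cancel_iff two_pos, eq_comm,
    sum_eq_sum_iff_of_le hle]
  constructor
  · intro h
    refine eq_of_subset_of_card_le (fun c hc => ?_) (by simp [Fin.card_filter_val_lt, hp])
    obtain ⟨i, rfl⟩ : c ∈ Set.range (p.orderEmbOfFin hp) := by rwa [range_orderEmbOfFin]
    simp [← h i (mem_univ i)]
  · rintro rfl i _
    exact (orderEmbOfFin_filter_val_lt hp i).symm

section NeZero

variable {n : ℕ} [NeZero n]

theorem Fin.sub_val_mod_add_val_add_ite (c : Fin n) :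
    (n - c) % n + c + (if c = 0 then n else 0) = n := by
  split_ifs with hc
  · simp [hc]
  · rw [Nat.mod_eq_of_lt (by have := Fin.pos_iff_ne_zero.2 hc; omega)]
    have := c.isLt
    omega

theorem sum_sub_val_mod_add_sum_val (q : Finset (Fin n)) :
    ∑ c ∈ q, (n - c) % n + ∑ c ∈ q, (c : ℕ) + (if 0 ∈ q then n else 0) = #q * n := by
  have h := sum_congr rfl fun c (_ : c ∈ q) => Fin.sub_val_mod_add_val_add_ite c
  rwa [sum_add_distrib, sum_add_distrib, sum_ite_eq', sum_const, smul_eq_mul] at h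

theorem sum_add_sum_compl_sub_val_mod_eq_iff {m : ℕ} (hodd : Odd n) (hm0 : 0 < m)
    {p : Finset (Fin n)} (hp : #p = m) :
    ∑ c ∈ p, (c : ℕ) + ∑ c ∈ pᶜ, (n - c) % n = m * (m - 1) / 2 + (n - m) * (n - m + 1) / 2
      ↔ p = univ.filter fun c : Fin n => (c : ℕ) < m := by
  have hmn : m ≤ n := hp ▸ card_le_univ p |>.trans_eq (Fintype.card_fin n)
  have hgauss : (∑ c ∈ p, (c : ℕ) + ∑ c ∈ pᶜ, (c : ℕ)) * 2 = n * (n - 1) := by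
    rw [sum_add_sum_compl, Fin.sum_univ_eq_sum_range (fun i => i), sum_range_id_mul_two]
  have hcompl := sum_sub_val_mod_add_sum_val pᶜ
  rw [card_compl, Fintype.card_fin, hp] at hcompl
  have hid : n * (n - 1) + (n - m) * (n - m + 1) = 2 * ((n - m) * n) + m * (m - 1) := by
    have h1 : 1 ≤ m := hm0
    zify [hmn, h1, h1.trans hmn]
    ring
  have hm2 := Nat.div_two_mul_two_of_even (Nat.even_mul_pred_self m)
  have hs2 := Nat.div_two_mul_two_of_even (Nat.even_mul_succ_self (n - m))
  have h0 : (0 : Fin n) ∈ univ.filter fun c : Fin n => (c : ℕ) < m := by simpa using hm0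
  constructor
  · intro h
    by_cases h0p : 0 ∈ p
    · rw [if_neg (notMem_compl.2 h0p)] at hcompl
      exact (sum_val_mul_two_eq_iff hp).1 (by omega)
    · rw [if_pos (mem_compl.2 h0p)] at hcompl
      obtain ⟨k, rfl⟩ := hodd
      omega
  · rintro rfl
    rw [if_neg (notMem_compl.2 h0)] at hcompl
    have := (sum_val_mul_two_eq_iff hp).2 rfl
    omega

end NeZero

theorem laplace_term_eq_iff_initial_segment
    (n : ℕ) (hodd : Odd n) (m : ℕ) (hm0 : 0 < m) (hm : m < n)
    (l : Fin m → ℤ) (j : Fin (n - m) → ℤ)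
    (hl : ∀ a b : Fin m, a ≠ b → ((l a : ZMod n) ≠ (l b : ZMod n)))
    (hj : ∀ a b : Fin (n - m), a ≠ b → ((j a : ZMod n) ≠ (j b : ZMod n)))
    (S : Matrix (Fin n) (Fin n) ℂ[X])
    (hS1 : ∀ (a : Fin m) (c : Fin n),
      S (Fin.castLE hm.le a) c = Polynomial.C (xi n ^ (((c : ℕ) : ℤ) * l a)) * X ^ (c : ℕ))
    (hS2 : ∀ (b : Fin (n - m)) (c : Fin n),
      S ⟨m + (b : ℕ), by have := b.isLt; omega⟩ c
        = Polynomial.C (xi n ^ (((c : ℕ) : ℤ) * j b)) * X ^ ((n - (c : ℕ)) % n))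
    (Cval : ℂ)
    (hC : Cval = (∏ a, xi n ^ ((m : ℤ) * j a)) *
        (∏ p ∈ Finset.univ.filter (fun p : Fin (n - m) × Fin (n - m) => p.1 < p.2),
          (xi n ^ j p.2 - xi n ^ j p.1)) *
        (∏ p ∈ Finset.univ.filter (fun p : Fin m × Fin m => p.1 < p.2),
          (xi n ^ l p.2 - xi n ^ l p.1)))
    (p : Finset (Fin n)) (hp : p.card = m) :
    ((S.submatrix (Fin.castLE hm.le) (fun i => (p.orderIsoOfFin hp i : Fin n))).det *
      (S.submatrix (fun b : Fin (n - m) => (⟨m + (b : ℕ), by have := b.isLt; omega⟩ : Fin n))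
        (fun i => ((pᶜ.orderIsoOfFin
          (by rw [Finset.card_compl, hp, Fintype.card_fin])) i : Fin n))).det
        = Polynomial.C Cval * X ^ (m * (m - 1) / 2 + (n - m) * (n - m + 1) / 2))
      ↔ p = Finset.univ.filter (fun c : Fin n => (c : ℕ) < m) := by
  have hn0 : n ≠ 0 := by omega
  have : NeZero n := ⟨hn0⟩
  have hxi : xi n ≠ 0 := (xi_isPrimitiveRoot hn0).ne_zero hn0
  have hCval : Cval = (∏ a, xi n ^ ((m : ℤ) * j a)) * (vandermonde fun b => xi n ^ j b).det *
      (vandermonde fun a => xi n ^ l a).det := by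
    rw [hC, ← prod_filter_fst_lt_snd_sub_eq_det_vandermonde,
      ← prod_filter_fst_lt_snd_sub_eq_det_vandermonde]
  have hCne : Cval ≠ 0 := by
    rw [hCval]
    exact mul_ne_zero (mul_ne_zero (prod_ne_zero_iff.2 fun a _ => zpow_ne_zero _ hxi)
      (det_vandermonde_xi_zpow_ne_zero hn0 hj)) (det_vandermonde_xi_zpow_ne_zero hn0 hl)
  simp only [coe_orderIsoOfFin_apply]
  rw [det_submatrix_eq_C_mul_X_pow _ _ _ _ _ hS1, det_submatrix_eq_C_mul_X_pow _ _ _ _ _ hS2,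
    C_mul_X_pow_eq_monomial, C_mul_X_pow_eq_monomial, C_mul_X_pow_eq_monomial,
    monomial_mul_monomial, monomial_eq_monomial_iff, sum_orderEmbOfFin,
    sum_orderEmbOfFin pᶜ _ fun c : Fin n => (n - c) % n,
    sum_add_sum_compl_sub_val_mod_eq_iff hodd hm0 hp]
  refine ⟨?_, fun hinit => Or.inl ⟨hinit, ?_⟩⟩
  · rintro (⟨hinit, -⟩ | ⟨-, hzero⟩)
    exacts [hinit, absurd hzero hCne]
  subst hinit
  rw [det_of_zpow_eq_prod_mul_det_vandermonde hxi l 0 _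
      fun i => by rw [orderEmbOfFin_filter_val_lt, zero_add],
    det_of_zpow_eq_prod_mul_det_vandermonde hxi j m _ (orderEmbOfFin_compl_filter_val_lt _),
    hCval]
  simp only [Nat.cast_zero, zero_mul, zpow_zero, prod_const_one, one_mul]
  ring
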